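/- For every integer n ≥ 1, the word Vₙ defined by V₁(x₁,x₂,x₃) = [[x₂,x₁,x₁,x₁,x₁], x₃, [x₂,x₁,x₁,x₁,x₁], x₃] and Vₙ = [V_{n-1}, x_{n+2}, V_{n-1}, x_{n+2}] lies in the (2^{n+2} + 2^{n+1} + 2ⁿ − 2)-th term of the lower central series: for any group G and elements g₁,…,g_{n+2} ∈ G, Vₙ(g₁,…,g_{n+2}) ∈ γ_{2^{n+2}+2^{n+1}+2^n−2}(G). -/

import Mathlib

/-- Commutator `[a,b] = a⁻¹b⁻¹ab`. -/
def gcomm {G : Type*} [Group G] (a b : G) : G := a⁻¹ * b⁻¹ * a * b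

/-- Left-normed iterated commutator `[x, ₙ y]`. -/
def engelComm {G : Type*} [Group G] (x y : G) : ℕ → G
  | 0 => x
  | n + 1 => gcomm (engelComm x y n) y

/-- A group is locally nilpotent if every finitely generated subgroup is nilpotent. -/
def IsLocallyNilpotent (G : Type*) [Group G] : Prop :=
  ∀ H : Subgroup G, H.FG → Group.IsNilpotent H

/-- The Hirsch–Plotkin radical: the subgroup generated by all normal locally
nilpotent subgroups of `G`. -/
def HirschPlotkinRadical (G : Type*) [Group G] : Subgroup G :=
  Subgroup.closure (⋃ H ∈ {H : Subgroup G | H.Normal ∧ IsLocallyNilpotent H}, (H : Set G))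

/-- The words `Vₙ`: `V₁(x₁,x₂,x₃) = [[x₂,x₁,x₁,x₁,x₁],x₃,[x₂,x₁,x₁,x₁,x₁],x₃]`,
`Vₙ = [V_{n-1}, x_{n+2}, V_{n-1}, x_{n+2}]`. -/
def wordV {G : Type*} [Group G] : ℕ → (ℕ → G) → G
  | 0, _ => 1
  | 1, x =>
      gcomm (gcomm (gcomm (gcomm (gcomm (gcomm (gcomm (x 2) (x 1)) (x 1)) (x 1)) (x 1)) (x 3))
        (gcomm (gcomm (gcomm (gcomm (x 2) (x 1)) (x 1)) (x 1)) (x 1))) (x 3)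
  | n + 2, x => gcomm (gcomm (gcomm (wordV (n + 1) x) (x (n + 4))) (wordV (n + 1) x)) (x (n + 4))

theorem lcs_map_eq {G H : Type*} [Group G] [Group H] (f : G →* H)
    (hf : Function.Surjective f) (n : ℕ) :
    ((⊤ : Subgroup G).lowerCentralSeries n).map f = (⊤ : Subgroup H).lowerCentralSeries n := by
  induction n with
  | zero => simpa using Subgroup.map_top_of_surjective f hf
  | succ n ih =>
      rw [Subgroup.lowerCentralSeries_succ, Subgroup.lowerCentralSeries_succ, ← ih,
        ← Subgroup.map_top_of_surjective f hf]
      exact Subgroup.map_commutator _ _ f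

open scoped commutatorElement in
theorem lcs_comm (k : ℕ) : ∀ (m : ℕ) (G : Type*) [Group G],
    ⁅(⊤ : Subgroup G).lowerCentralSeries m, (⊤ : Subgroup G).lowerCentralSeries k⁆ ≤ (⊤ : Subgroup G).lowerCentralSeries (m + k + 1) := by
  induction k with
  | zero =>
      intro m G _
      rw [Subgroup.lowerCentralSeries_zero]
      exact le_of_eq (Subgroup.lowerCentralSeries_succ ⊤ m).symm
  | succ k ih =>
      intro m G _
      set N := (⊤ : Subgroup G).lowerCentralSeries (m + (k + 1) + 1) with hN
      haveI : N.Normal := inferInstance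
      let π := QuotientGroup.mk' N
      have hπ : Function.Surjective π := QuotientGroup.mk'_surjective N
      have hQbot : (⊤ : Subgroup (G ⧸ N)).lowerCentralSeries (m + (k + 1) + 1) = ⊥ := by
        rw [← lcs_map_eq π hπ, Subgroup.map_eq_bot_iff, QuotientGroup.ker_mk']
      have e1 : ⁅(⊤ : Subgroup (G ⧸ N)), (⊤ : Subgroup (G ⧸ N)).lowerCentralSeries m⁆ =
          (⊤ : Subgroup (G ⧸ N)).lowerCentralSeries (m + 1) := by
        rw [Subgroup.commutator_comm (⊤ : Subgroup (G ⧸ N)) ((⊤ : Subgroup (G ⧸ N)).lowerCentralSeries m)]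
        exact (Subgroup.lowerCentralSeries_succ ⊤ m).symm
      have h1 : ⁅⁅(⊤ : Subgroup (G ⧸ N)), (⊤ : Subgroup (G ⧸ N)).lowerCentralSeries m⁆,
          (⊤ : Subgroup (G ⧸ N)).lowerCentralSeries k⁆ = ⊥ := by
        rw [e1, eq_bot_iff, ← hQbot]
        calc ⁅(⊤ : Subgroup (G ⧸ N)).lowerCentralSeries (m + 1), (⊤ : Subgroup (G ⧸ N)).lowerCentralSeries k⁆
            ≤ (⊤ : Subgroup (G ⧸ N)).lowerCentralSeries (m + 1 + k + 1) := ih (m + 1) _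
          _ = (⊤ : Subgroup (G ⧸ N)).lowerCentralSeries (m + (k + 1) + 1) := by ring_nf
      have h2 : ⁅⁅(⊤ : Subgroup (G ⧸ N)).lowerCentralSeries m, (⊤ : Subgroup (G ⧸ N)).lowerCentralSeries k⁆,
          (⊤ : Subgroup (G ⧸ N))⁆ = ⊥ := by
        rw [eq_bot_iff, ← hQbot]
        calc ⁅⁅(⊤ : Subgroup (G ⧸ N)).lowerCentralSeries m, (⊤ : Subgroup (G ⧸ N)).lowerCentralSeries k⁆,
              (⊤ : Subgroup (G ⧸ N))⁆
            ≤ ⁅(⊤ : Subgroup (G ⧸ N)).lowerCentralSeries (m + k + 1), (⊤ : Subgroup (G ⧸ N))⁆ :=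
              Subgroup.commutator_mono (ih m _) le_rfl
          _ = (⊤ : Subgroup (G ⧸ N)).lowerCentralSeries (m + k + 1 + 1) := (Subgroup.lowerCentralSeries_succ ⊤ _).symm
          _ = (⊤ : Subgroup (G ⧸ N)).lowerCentralSeries (m + (k + 1) + 1) := by ring_nf
      have h3 : ⁅⁅(⊤ : Subgroup (G ⧸ N)).lowerCentralSeries k, (⊤ : Subgroup (G ⧸ N))⁆,
          (⊤ : Subgroup (G ⧸ N)).lowerCentralSeries m⁆ = ⊥ :=
        Subgroup.commutator_commutator_eq_bot_of_rotate h1 h2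
      have hb0 : ⁅(⊤ : Subgroup (G ⧸ N)).lowerCentralSeries m, (⊤ : Subgroup (G ⧸ N)).lowerCentralSeries (k + 1)⁆ =
          (⊥ : Subgroup (G ⧸ N)) := by
        rw [Subgroup.commutator_comm]; exact h3
      rw [Subgroup.commutator_le]
      intro a ha b hb
      have : π ⁅a, b⁆ ∈ (⊥ : Subgroup (G ⧸ N)) := by
        rw [map_commutatorElement, ← hb0]
        exact Subgroup.commutator_mem_commutator
          ((lcs_map_eq π hπ m).le (Subgroup.mem_map_of_mem π ha))
          ((lcs_map_eq π hπ (k + 1)).le (Subgroup.mem_map_of_mem π hb))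
      rwa [Subgroup.mem_bot, ← MonoidHom.mem_ker, QuotientGroup.ker_mk'] at this

open scoped commutatorElement in
theorem gcomm_mem {G : Type*} [Group G] {a b : G} {m k : ℕ}
    (ha : a ∈ (⊤ : Subgroup G).lowerCentralSeries m) (hb : b ∈ (⊤ : Subgroup G).lowerCentralSeries k) :
    gcomm a b ∈ (⊤ : Subgroup G).lowerCentralSeries (m + k + 1) := by
  have h : gcomm a b = ⁅a⁻¹, b⁻¹⁆ := by
    simp [gcomm, commutatorElement_def]
  rw [h]
  exact lcs_comm k m G (Subgroup.commutator_mem_commutator (inv_mem ha) (inv_mem hb))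

theorem gcomm_mem' {G : Type*} [Group G] {a b : G} {m k r : ℕ}
    (ha : a ∈ (⊤ : Subgroup G).lowerCentralSeries m) (hb : b ∈ (⊤ : Subgroup G).lowerCentralSeries k)
    (h : m + k + 1 = r) : gcomm a b ∈ (⊤ : Subgroup G).lowerCentralSeries r :=
  h ▸ gcomm_mem ha hb

theorem wordV_mem_lowerCentralSeries (n : ℕ) (hn : 1 ≤ n)
    {G : Type*} [Group G] (x : ℕ → G) :
    wordV n x ∈ (⊤ : Subgroup G).lowerCentralSeries (2 ^ (n + 2) + 2 ^ (n + 1) + 2 ^ n - 2 - 1) := by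
  induction n, hn using Nat.le_induction with
  | base =>
      have e : (2 ^ (1 + 2) + 2 ^ (1 + 1) + 2 ^ 1 - 2 - 1 : ℕ) = 11 := by norm_num
      rw [e]
      have t : ∀ i : ℕ, x i ∈ (⊤ : Subgroup G).lowerCentralSeries 0 := fun _ => Subgroup.mem_top _
      have w1 : gcomm (x 2) (x 1) ∈ (⊤ : Subgroup G).lowerCentralSeries 1 := gcomm_mem' (t 2) (t 1) rfl
      have w2 : gcomm (gcomm (x 2) (x 1)) (x 1) ∈ (⊤ : Subgroup G).lowerCentralSeries 2 := gcomm_mem' w1 (t 1) rfl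
      have w3 : gcomm (gcomm (gcomm (x 2) (x 1)) (x 1)) (x 1) ∈ (⊤ : Subgroup G).lowerCentralSeries 3 :=
        gcomm_mem' w2 (t 1) rfl
      have w4 : gcomm (gcomm (gcomm (gcomm (x 2) (x 1)) (x 1)) (x 1)) (x 1) ∈
          (⊤ : Subgroup G).lowerCentralSeries 4 := gcomm_mem' w3 (t 1) rfl
      have w5 : gcomm (gcomm (gcomm (gcomm (gcomm (x 2) (x 1)) (x 1)) (x 1)) (x 1)) (x 3) ∈
          (⊤ : Subgroup G).lowerCentralSeries 5 := gcomm_mem' w4 (t 3) rfl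
      exact gcomm_mem' (gcomm_mem' w5 w4 rfl) (t 3) rfl
  | succ n hn ih =>
      obtain ⟨m, rfl⟩ : ∃ m, n = m + 1 := ⟨n - 1, by omega⟩
      set M : ℕ := 2 ^ (m + 1 + 2) + 2 ^ (m + 1 + 1) + 2 ^ (m + 1) - 2 - 1 with hM
      have hpow : 2 ≤ 2 ^ (m + 1) := Nat.one_lt_two_pow (by omega)
      have e : 2 ^ (m + 1 + 1 + 2) + 2 ^ (m + 1 + 1 + 1) + 2 ^ (m + 1 + 1) - 2 - 1 =
          M + 1 + M + 1 + 1 := by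
        simp only [hM, pow_succ]
        omega
      rw [e]
      have t : x (m + 4) ∈ (⊤ : Subgroup G).lowerCentralSeries 0 := Subgroup.mem_top _
      have h1 : gcomm (wordV (m + 1) x) (x (m + 4)) ∈ (⊤ : Subgroup G).lowerCentralSeries (M + 1) :=
        gcomm_mem' ih t rfl
      have h2 : gcomm (gcomm (wordV (m + 1) x) (x (m + 4))) (wordV (m + 1) x) ∈
          (⊤ : Subgroup G).lowerCentralSeries (M + 1 + M + 1) := gcomm_mem' h1 ih rfl
      exact gcomm_mem' h2 t rfl
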